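/- Let all variables be discrete. Suppose Y ⊥ Z | (A,M,X) and W ⊥ (A,Z) | (M,X). If for all m,x: Σ_y y·p(y | m, a', x) = Σ_w h(w,a',x)·p(w | m, x), then Σ_{y,m,x} y·p(y|m,a',x)·p(m|a,x)·p(x) = Σ_{w,x} h(w,a',x)·p(w|a,x)·p(x). -/
import Mathlib


open Finset
open scoped Classical

noncomputable section

/-- Probability of an event under weights `mu`. -/
def pr {O : Type} [Fintype O] (mu : O -> Real) (s : O -> Prop) : Real :=
  Finset.univ.sum (fun w => if s w then mu w else 0)

/-- Conditional probability `P(s | t)`. -/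
def cpr {O : Type} [Fintype O] (mu : O -> Real) (s t : O -> Prop) : Real :=
  pr mu (fun w => s w /\ t w) / pr mu t

/-- Expectation of `f`. -/
def expec {O : Type} [Fintype O] (mu : O -> Real) (f : O -> Real) : Real :=
  Finset.univ.sum (fun w => f w * mu w)

/-- Conditional expectation `E[f | t]`. -/
def cexp {O : Type} [Fintype O] (mu : O -> Real) (f : O -> Real) (t : O -> Prop) : Real :=
  (Finset.univ.sum (fun w => if t w then f w * mu w else 0)) / pr mu t


lemma pr_nonneg {O : Type} [Fintype O] (mu : O -> Real) (h0 : forall o, 0 <= mu o)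
    (s : O -> Prop) : 0 <= pr mu s := by
  apply Finset.sum_nonneg
  intro o _
  by_cases hs : s o <;> simp [hs, h0 o]

lemma pr_mono {O : Type} [Fintype O] (mu : O -> Real) (h0 : forall o, 0 <= mu o)
    (s t : O -> Prop) (h : forall o, s o -> t o) : pr mu s <= pr mu t := by
  apply Finset.sum_le_sum
  intro o _
  by_cases hs : s o
  · simp [hs, h o hs]
  · by_cases ht : t o <;> simp [hs, ht, h0 o]

lemma pr_congr {O : Type} [Fintype O] (mu : O -> Real) (s t : O -> Prop)
    (h : forall o, s o <-> t o) : pr mu s = pr mu t := by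
  unfold pr
  apply Finset.sum_congr rfl
  intro o _
  simp [h o]

lemma pr_decomp {O T : Type} [Fintype O] [Fintype T] [DecidableEq T]
    (mu : O -> Real) (f : O -> T) (s : O -> Prop) :
    pr mu s = Finset.univ.sum (fun t => pr mu (fun o => f o = t /\ s o)) := by
  unfold pr
  rw [Finset.sum_comm]
  apply Finset.sum_congr rfl
  intro o _
  by_cases hs : s o <;> simp [hs]

theorem stmt16
    {O TA TM TZ TW TX : Type}
    [Fintype O] [Fintype TA] [Fintype TM] [Fintype TZ] [Fintype TW] [Fintype TX]
    [DecidableEq TA] [DecidableEq TM] [DecidableEq TZ] [DecidableEq TW] [DecidableEq TX]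
    (mu : O -> Real) (hmu0 : forall o : O, 0 <= mu o)
    (hmu1 : Finset.univ.sum mu = 1)
    (A : O -> TA) (Y : O -> Real) (M : O -> TM) (Z : O -> TZ) (W : O -> TW) (X : O -> TX)
    (a a' : TA) (h : TW -> TA -> TX -> Real)
    (hYZ : forall (y : Real) (z : TZ) (t : TA) (m : TM) (x : TX),
      pr mu (fun o => Y o = y /\ Z o = z /\ A o = t /\ M o = m /\ X o = x) *
        pr mu (fun o => A o = t /\ M o = m /\ X o = x) =
      pr mu (fun o => Y o = y /\ A o = t /\ M o = m /\ X o = x) *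
        pr mu (fun o => Z o = z /\ A o = t /\ M o = m /\ X o = x))
    (hWA : forall (v : TW) (t : TA) (z : TZ) (m : TM) (x : TX),
      pr mu (fun o => W o = v /\ A o = t /\ Z o = z /\ M o = m /\ X o = x) *
        pr mu (fun o => M o = m /\ X o = x) =
      pr mu (fun o => W o = v /\ M o = m /\ X o = x) *
        pr mu (fun o => A o = t /\ Z o = z /\ M o = m /\ X o = x))
    (hpos : forall (m : TM) (x : TX), 0 < pr mu (fun o => X o = x) ->
      0 < pr mu (fun o => M o = m /\ A o = a /\ X o = x))
    (hmatch : forall (m : TM) (x : TX),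
      cexp mu Y (fun o => M o = m /\ A o = a' /\ X o = x) =
      Finset.univ.sum (fun v : TW =>
        h v a' x * cpr mu (fun o => W o = v) (fun o => M o = m /\ X o = x))) :
    Finset.univ.sum (fun x : TX =>
      (Finset.univ.sum (fun m : TM =>
        cexp mu Y (fun o => M o = m /\ A o = a' /\ X o = x) *
          cpr mu (fun o => M o = m) (fun o => A o = a /\ X o = x))) *
        pr mu (fun o => X o = x)) =
    Finset.univ.sum (fun x : TX =>
      (Finset.univ.sum (fun v : TW =>
        h v a' x * cpr mu (fun o => W o = v) (fun o => A o = a /\ X o = x))) *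
        pr mu (fun o => X o = x)) := by
  have hOne : Nonempty O := by
    by_contra hO
    rw [not_nonempty_iff] at hO
    rw [Finset.univ_eq_empty, Finset.sum_empty] at hmu1
    exact one_ne_zero hmu1.symm
  obtain ⟨o0⟩ := hOne
  apply Finset.sum_congr rfl
  intro x _
  rcases eq_or_lt_of_le (pr_nonneg mu hmu0 (fun o => X o = x)) with hx | hx
  · rw [<- hx, mul_zero, mul_zero]
  congr 1
  have hPax : 0 < pr mu (fun o => A o = a /\ X o = x) := by
    refine lt_of_lt_of_le (hpos (M o0) x hx) (pr_mono mu hmu0 _ _ ?_)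
    rintro o ⟨_, h2⟩
    exact h2
  have key : forall v : TW,
      (Finset.univ.sum fun m : TM =>
        cpr mu (fun o => W o = v) (fun o => M o = m /\ X o = x) *
        cpr mu (fun o => M o = m) (fun o => A o = a /\ X o = x)) =
      cpr mu (fun o => W o = v) (fun o => A o = a /\ X o = x) := by
    intro v
    have hsum : (Finset.univ.sum fun m : TM =>
        pr mu (fun o => M o = m /\ W o = v /\ A o = a /\ X o = x)) =
        pr mu (fun o => W o = v /\ A o = a /\ X o = x) :=
      (pr_decomp mu M _).symm
    rw [cpr, <- hsum, Finset.sum_div]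
    apply Finset.sum_congr rfl
    intro m _
    have hPmax : 0 < pr mu (fun o => M o = m /\ A o = a /\ X o = x) := hpos m x hx
    have hPmx : 0 < pr mu (fun o => M o = m /\ X o = x) := by
      refine lt_of_lt_of_le hPmax (pr_mono mu hmu0 _ _ ?_)
      rintro o ⟨h1, _, h3⟩
      exact ⟨h1, h3⟩
    have hind : pr mu (fun o => W o = v /\ A o = a /\ M o = m /\ X o = x) *
        pr mu (fun o => M o = m /\ X o = x) =
        pr mu (fun o => W o = v /\ M o = m /\ X o = x) *
        pr mu (fun o => A o = a /\ M o = m /\ X o = x) := by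
      have h1 : pr mu (fun o => W o = v /\ A o = a /\ M o = m /\ X o = x) =
          Finset.univ.sum (fun z : TZ =>
            pr mu (fun o => W o = v /\ A o = a /\ Z o = z /\ M o = m /\ X o = x)) := by
        rw [pr_decomp mu Z (fun o => W o = v /\ A o = a /\ M o = m /\ X o = x)]
        exact Finset.sum_congr rfl fun z _ => pr_congr mu _ _ (fun o => by tauto)
      have h2 : pr mu (fun o => A o = a /\ M o = m /\ X o = x) =
          Finset.univ.sum (fun z : TZ =>
            pr mu (fun o => A o = a /\ Z o = z /\ M o = m /\ X o = x)) := by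
        rw [pr_decomp mu Z (fun o => A o = a /\ M o = m /\ X o = x)]
        exact Finset.sum_congr rfl fun z _ => pr_congr mu _ _ (fun o => by tauto)
      rw [h1, h2, Finset.sum_mul, Finset.mul_sum]
      exact Finset.sum_congr rfl fun z _ => hWA v a z m x
    have e1 : pr mu (fun o => M o = m /\ W o = v /\ A o = a /\ X o = x) =
        pr mu (fun o => W o = v /\ A o = a /\ M o = m /\ X o = x) :=
      pr_congr mu _ _ (fun o => by tauto)
    have e2 : pr mu (fun o => M o = m /\ A o = a /\ X o = x) =
        pr mu (fun o => A o = a /\ M o = m /\ X o = x) :=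
      pr_congr mu _ _ (fun o => by tauto)
    simp only [cpr]
    rw [e1, e2]
    field_simp
    nlinarith [hind, hPax, hPmx]
  have step : forall m : TM,
      cexp mu Y (fun o => M o = m /\ A o = a' /\ X o = x) *
        cpr mu (fun o => M o = m) (fun o => A o = a /\ X o = x) =
      Finset.univ.sum (fun v : TW => h v a' x *
        cpr mu (fun o => W o = v) (fun o => M o = m /\ X o = x) *
        cpr mu (fun o => M o = m) (fun o => A o = a /\ X o = x)) := by
    intro m
    rw [hmatch m x, Finset.sum_mul]
  rw [Finset.sum_congr rfl (fun m _ => step m), Finset.sum_comm]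
  apply Finset.sum_congr rfl
  intro v _
  rw [<- key v, Finset.mul_sum]
  exact Finset.sum_congr rfl fun m _ => by ring
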